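/- Let P be a (weakly) stochastically transitive ranking distribution on S_n and let d be the Kendall tau distance. Then the set of Kemeny medians of P, i.e. the minimizers of L_P over S_n, equals { σ ∈ S_n : (p_{i,j} − 1/2)·(σ(j) − σ(i)) > 0 for all i < j such that p_{i,j} ≠ 1/2 }, and the optimal value is V_P = Σ_{1≤i<j≤n} min{ p_{i,j}, 1 − p_{i,j} }. If moreover P is strictly stochastically transitive, the Kemeny median σ*_P is unique and is given by the Copeland ranking: σ*_P(i) = 1 + #{ j ≠ i : p_{i,j} < 1/2 } for every i ∈ {1,…,n}. -/
import Mathlib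


open Finset
open scoped BigOperators Classical

noncomputable section

namespace CRD

/-- The symmetric group on `n` items. -/
abbrev Perm (n : ℕ) := Equiv.Perm (Fin n)

variable {n : ℕ}

/-- `d` is a metric on `α`. -/
def IsMetric {α : Type*} (d : α → α → ℝ) : Prop :=
  (∀ x y, 0 ≤ d x y) ∧ (∀ x y, d x y = 0 ↔ x = y) ∧
    (∀ x y, d x y = d y x) ∧ ∀ x y z, d x z ≤ d x y + d y z

/-- A ranking distribution: a probability distribution on the symmetric group. -/
def IsRankingDist (P : Perm n → ℝ) : Prop := (∀ σ, 0 ≤ P σ) ∧ ∑ σ, P σ = 1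

/-- Mass of a region `C ⊆ S_n` under `P`. -/
def mass (P : Perm n → ℝ) (C : Finset (Perm n)) : ℝ := ∑ σ ∈ C, P σ

/-- The ranking risk `L_P(σ) = E_{Σ ~ P}[d(Σ, σ)]`. -/
def riskL (d : Perm n → Perm n → ℝ) (P : Perm n → ℝ) (σ : Perm n) : ℝ := ∑ τ, P τ * d τ σ

/-- The variability `V_P = min_σ L_P(σ)`. -/
def V (d : Perm n → Perm n → ℝ) (P : Perm n → ℝ) : ℝ := ⨅ σ : Perm n, riskL d P σ

/-- The alternative dispersion `V'_P = (1/2) E[d(Σ, Σ')]`, `Σ, Σ'` i.i.d. with law `P`. -/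
def V' (d : Perm n → Perm n → ℝ) (P : Perm n → ℝ) : ℝ :=
  (1 / 2) * ∑ σ, ∑ τ, P σ * P τ * d σ τ

/-- The conditional law of `Σ ~ P` given `Σ ∈ C`. -/
def condDist (P : Perm n → ℝ) (C : Finset (Perm n)) : Perm n → ℝ :=
  fun σ => if σ ∈ C then P σ / mass P C else 0

/-- `σ` is a ranking median of `P` w.r.t. `d`: it minimizes the ranking risk. -/
def IsMedian (d : Perm n → Perm n → ℝ) (P : Perm n → ℝ) (σ : Perm n) : Prop :=
  ∀ τ, riskL d P σ ≤ riskL d P τ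

/-- The Dirac mass at `σ`. -/
def dirac (σ : Perm n) : Perm n → ℝ := fun τ => if τ = σ then 1 else 0

/-- `μ` is a coupling of `P` and `Q`. -/
def IsCoupling (P Q : Perm n → ℝ) (μ : Perm n → Perm n → ℝ) : Prop :=
  (∀ x y, 0 ≤ μ x y) ∧ (∀ x, ∑ y, μ x y = P x) ∧ ∀ y, ∑ x, μ x y = Q y

/-- The Wasserstein metric with cost `d`: infimum over couplings of `E[d(Σ, Σ')]`. -/
def W (d : Perm n → Perm n → ℝ) (P Q : Perm n → ℝ) : ℝ :=
  sInf {c : ℝ | ∃ μ, IsCoupling P Q μ ∧ c = ∑ x, ∑ y, μ x y * d x y}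

/-- `Pp` is a partition of `S_n` into (nonempty, pairwise disjoint, covering) cells. -/
def IsPartition (Pp : Finset (Finset (Perm n))) : Prop :=
  (∀ C ∈ Pp, C.Nonempty) ∧ (∀ C ∈ Pp, ∀ C' ∈ Pp, C ≠ C' → Disjoint C C') ∧
    Pp.sup id = Finset.univ

/-- The consensus ranking distribution `P_Pp = Σ_{C ∈ Pp} P(C) δ_{s C}`. -/
def CRDdist (P : Perm n → ℝ) (Pp : Finset (Finset (Perm n)))
    (s : Finset (Perm n) → Perm n) : Perm n → ℝ :=
  fun τ => ∑ C ∈ Pp, mass P C * dirac (s C) τ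

/-- `𝓔_P(Pp) = Σ_{C ∈ Pp} P(C) V(C)`. -/
def distortionE (d : Perm n → Perm n → ℝ) (P : Perm n → ℝ)
    (Pp : Finset (Finset (Perm n))) : ℝ :=
  ∑ C ∈ Pp, mass P C * V d (condDist P C)

/-- `𝓔'_P(Pp) = Σ_{C ∈ Pp} P(C) V'(C)`. -/
def distortionE' (d : Perm n → Perm n → ℝ) (P : Perm n → ℝ)
    (Pp : Finset (Finset (Perm n))) : ℝ :=
  ∑ C ∈ Pp, mass P C * V' d (condDist P C)

/-- The pairs `(i, j)` with `i < j`. -/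
def pairsLt (n : ℕ) : Finset (Fin n × Fin n) := Finset.univ.filter fun p => p.1 < p.2

/-- The Kendall tau distance: number of discordant pairs. -/
def kendall (σ σ' : Perm n) : ℝ :=
  ∑ p ∈ pairsLt n, if (σ p.1 < σ p.2 ↔ σ' p.1 < σ' p.2) then 0 else 1

/-- The pairwise marginal `p_{i,j} = P{Σ(i) < Σ(j)}`. -/
def pairProb (P : Perm n → ℝ) (i j : Fin n) : ℝ :=
  ∑ σ ∈ Finset.univ.filter (fun σ : Perm n => σ i < σ j), P σ

/-- Weak stochastic transitivity. -/
def IsWST (P : Perm n → ℝ) : Prop :=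
  ∀ i j k : Fin n, 1 / 2 ≤ pairProb P i j → 1 / 2 ≤ pairProb P j k → 1 / 2 ≤ pairProb P i k

/-- Strict stochastic transitivity. -/
def IsSST (P : Perm n → ℝ) : Prop :=
  IsWST P ∧ ∀ i j : Fin n, i < j → pairProb P i j ≠ 1 / 2

/-- `V''_P = Σ_{i<j} min(p_{i,j}, 1 - p_{i,j})`. -/
def V'' (P : Perm n → ℝ) : ℝ :=
  ∑ p ∈ pairsLt n, min (pairProb P p.1 p.2) (1 - pairProb P p.1 p.2)

/-- The ranking depth `D_P(σ) = max_{σ₁,σ₂} d(σ₁,σ₂) - L_P(σ)`. -/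
def depth (d : Perm n → Perm n → ℝ) (P : Perm n → ℝ) (σ : Perm n) : ℝ :=
  (⨆ p : Perm n × Perm n, d p.1 p.2) - riskL d P σ

/-- `‖d‖_∞ = max_{σ,σ'} d(σ,σ')`. -/
def dsup (d : Perm n → Perm n → ℝ) : ℝ := ⨆ p : Perm n × Perm n, d p.1 p.2

/-- The product (i.i.d.) weight of a sample `ω = (Σ_1, …, Σ_N)`. -/
def prodP (P : Perm n → ℝ) {N : ℕ} (ω : Fin N → Perm n) : ℝ := ∏ i, P (ω i)

/-- Probability of the event `E` under `N` i.i.d. draws from `P`. -/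
def probN (P : Perm n → ℝ) (N : ℕ) (E : (Fin N → Perm n) → Prop) : ℝ :=
  ∑ ω : Fin N → Perm n, if E ω then prodP P ω else 0

/-- `N_C`: number of sample points falling in `C`. -/
def Ncell {N : ℕ} (ω : Fin N → Perm n) (C : Finset (Perm n)) : ℕ :=
  (Finset.univ.filter fun i => ω i ∈ C).card

/-- Empirical cell frequency `P̂_N(C) = N_C / N`. -/
def Phat {N : ℕ} (ω : Fin N → Perm n) (C : Finset (Perm n)) : ℝ := (Ncell ω C : ℝ) / N

/-- The pairs `(i, j)` of sample indices with `i < j`. -/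
def pairsLtN (N : ℕ) : Finset (Fin N × Fin N) := Finset.univ.filter fun p => p.1 < p.2

/-- The empirical local variability `V̂'_N(C)`. -/
def Vhat' (d : Perm n → Perm n → ℝ) {N : ℕ} (ω : Fin N → Perm n)
    (C : Finset (Perm n)) : ℝ :=
  if 2 ≤ Ncell ω C then
    2 / ((Ncell ω C : ℝ) * ((Ncell ω C : ℝ) - 1)) *
      ∑ p ∈ pairsLtN N, if ω p.1 ∈ C ∧ ω p.2 ∈ C then d (ω p.1) (ω p.2) else 0
  else 0

/-- The plug-in empirical criterion `Ê'_N(Pp) = Σ_{C ∈ Pp} P̂_N(C) V̂'_N(C)`. -/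
def Ehat' (d : Perm n → Perm n → ℝ) {N : ℕ} (ω : Fin N → Perm n)
    (Pp : Finset (Finset (Perm n))) : ℝ :=
  ∑ C ∈ Pp, Phat ω C * Vhat' d ω C

/-- The symmetric kernel `Φ_Pp(σ,σ') = Σ_{C ∈ Pp} 1{(σ,σ') ∈ C×C}/P(C) · d(σ,σ')`. -/
def kernelPhi (d : Perm n → Perm n → ℝ) (P : Perm n → ℝ)
    (Pp : Finset (Finset (Perm n))) (σ σ' : Perm n) : ℝ :=
  ∑ C ∈ Pp, (if σ ∈ C ∧ σ' ∈ C then (1 : ℝ) else 0) / mass P C * d σ σ'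

/-- The degree-2 U-statistic `Ũ_N(Pp)` built on the kernel `Φ_Pp`. -/
def Ustat (d : Perm n → Perm n → ℝ) (P : Perm n → ℝ)
    (Pp : Finset (Finset (Perm n))) {N : ℕ} (ω : Fin N → Perm n) : ℝ :=
  2 / ((N : ℝ) * ((N : ℝ) - 1)) * ∑ p ∈ pairsLtN N, kernelPhi d P Pp (ω p.1) (ω p.2)

lemma perm_apply_ne {σ : Perm n} {i j : Fin n} (h : i ≠ j) : σ i ≠ σ j :=
  fun hc => h (σ.injective hc)

lemma pairProb_self (P : Perm n → ℝ) (i : Fin n) : pairProb P i i = 0 := by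
  unfold pairProb
  rw [Finset.filter_false_of_mem (fun σ _ => lt_irrefl (σ i)), Finset.sum_empty]

lemma filter_not_lt {i j : Fin n} (h : i ≠ j) :
    (Finset.univ.filter fun τ : Perm n => τ j < τ i) =
      Finset.univ.filter fun τ : Perm n => ¬ τ i < τ j := by
  ext τ
  simp only [Finset.mem_filter, Finset.mem_univ, true_and]
  constructor
  · exact fun h' => not_lt_of_gt h'
  · intro h'
    rcases lt_or_gt_of_ne (perm_apply_ne h : τ i ≠ τ j) with h2 | h2
    · exact absurd h2 h'
    · exact h2

lemma pairProb_add (P : Perm n → ℝ) (hP : IsRankingDist P) {i j : Fin n} (h : i ≠ j) :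
    pairProb P i j + pairProb P j i = 1 := by
  unfold pairProb
  rw [← hP.2, ← Finset.sum_filter_add_sum_filter_not Finset.univ (fun σ => σ i < σ j) P]
  congr 1
  exact Finset.sum_congr (filter_not_lt h) (fun _ _ => rfl)

lemma riskL_eq (P : Perm n → ℝ) (hP : IsRankingDist P) (σ : Perm n) :
    riskL kendall P σ = ∑ p ∈ pairsLt n,
      (if σ p.1 < σ p.2 then 1 - pairProb P p.1 p.2 else pairProb P p.1 p.2) := by
  unfold riskL kendall
  simp_rw [Finset.mul_sum]
  rw [Finset.sum_comm]
  refine Finset.sum_congr rfl fun p hp => ?_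
  have hne : p.1 ≠ p.2 := ne_of_lt (by simpa [pairsLt] using hp)
  by_cases hs : σ p.1 < σ p.2
  · rw [if_pos hs]
    have h1 : ∀ τ : Perm n, τ ∈ (Finset.univ : Finset (Perm n)) →
        P τ * (if (τ p.1 < τ p.2 ↔ σ p.1 < σ p.2) then (0:ℝ) else 1)
        = if ¬ τ p.1 < τ p.2 then P τ else 0 := by
      intro τ _; by_cases h : τ p.1 < τ p.2 <;> simp [h, hs]
    rw [Finset.sum_congr rfl h1, ← Finset.sum_filter]
    have hadd : pairProb P p.2 p.1 + pairProb P p.1 p.2 = 1 := pairProb_add P hP hne.symm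
    have h2 : pairProb P p.2 p.1 =
        ∑ τ ∈ Finset.univ.filter (fun τ : Perm n => ¬ τ p.1 < τ p.2), P τ := by
      unfold pairProb; rw [filter_not_lt hne]
    linarith [h2 ▸ hadd]
  · rw [if_neg hs]
    have h1 : ∀ τ : Perm n, τ ∈ (Finset.univ : Finset (Perm n)) →
        P τ * (if (τ p.1 < τ p.2 ↔ σ p.1 < σ p.2) then (0:ℝ) else 1)
        = if τ p.1 < τ p.2 then P τ else 0 := by
      intro τ _; by_cases h : τ p.1 < τ p.2 <;> simp [h, hs]
    rw [Finset.sum_congr rfl h1, ← Finset.sum_filter]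
    rfl

lemma exists_perm_of_strict (r : Fin n → Fin n → Prop)
    (htrans : Transitive r) (hirr : ∀ i, ¬ r i i)
    (htot : ∀ i j, i ≠ j → r i j ∨ r j i) :
    ∃ σ : Perm n, ∀ i j, r i j → σ i < σ j := by
  classical
  set rank : Fin n → ℕ := fun i => (Finset.univ.filter (fun k => r k i)).card with hrank
  have hlt : ∀ i j, r i j → rank i < rank j := by
    intro i j hij
    apply Finset.card_lt_card
    constructor
    · intro k hk
      simp only [Finset.mem_filter, Finset.mem_univ, true_and] at hk ⊢
      exact htrans hk hij
    · intro hsub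
      have hi : i ∈ Finset.univ.filter (fun k => r k j) := by simp [hij]
      have h2 := hsub hi
      simp only [Finset.mem_filter, Finset.mem_univ, true_and] at h2
      exact hirr i h2
  have hbound : ∀ i, rank i < n := by
    intro i
    have hss : Finset.univ.filter (fun k => r k i) ⊂ Finset.univ := by
      refine Finset.ssubset_univ_iff.mpr ?_
      intro h
      have hi : i ∈ Finset.univ.filter (fun k => r k i) := by
        rw [h]; exact Finset.mem_univ i
      simp only [Finset.mem_filter, Finset.mem_univ, true_and] at hi
      exact hirr i hi
    simpa using Finset.card_lt_card hss
  set f : Fin n → Fin n := fun i => ⟨rank i, hbound i⟩ with hf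
  have hinj : Function.Injective f := by
    intro i j hfij
    by_contra hne
    rcases htot i j hne with h | h
    · exact absurd (congrArg Fin.val hfij) (Nat.ne_of_lt (hlt _ _ h))
    · exact absurd (congrArg Fin.val hfij).symm (Nat.ne_of_lt (hlt _ _ h))
  refine ⟨Equiv.ofBijective f (Finite.injective_iff_bijective.mp hinj), fun i j h => ?_⟩
  show f i < f j
  exact Fin.mk_lt_mk.mpr (hlt i j h)

lemma exists_consistent (P : Perm n → ℝ) (hwst : IsWST P) :
    ∃ σ : Perm n, ∀ i j : Fin n, 1 / 2 < pairProb P i j → σ i < σ j := by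
  classical
  set b : Fin n → Fin n → Prop := fun i j => 1 / 2 < pairProb P i j with hb
  have hhalf : ∀ i j, Relation.TransGen b i j → 1 / 2 ≤ pairProb P i j := by
    intro i j h
    induction h with
    | single h => exact le_of_lt h
    | tail _ h2 ih => exact hwst _ _ _ ih (le_of_lt h2)
  have hirrT : ∀ i, ¬ Relation.TransGen b i i := by
    intro i h
    have := hhalf i i h
    rw [pairProb_self] at this
    linarith
  set s : Fin n → Fin n → Prop := fun i j => i = j ∨ Relation.TransGen b i j with hs
  haveI hpo : IsPartialOrder (Fin n) s :=
    { refl := fun i => Or.inl rfl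
      trans := by
        rintro i j k (rfl | h1) h2
        · exact h2
        · rcases h2 with rfl | h2
          · exact Or.inr h1
          · exact Or.inr (h1.trans h2)
      antisymm := by
        rintro i j (rfl | h1) h2
        · rfl
        · rcases h2 with rfl | h2
          · rfl
          · exact absurd (h1.trans h2) (hirrT i) }
  obtain ⟨t, hlin, hts⟩ := extend_partialOrder s
  haveI := hlin
  set t' : Fin n → Fin n → Prop := fun i j => t i j ∧ i ≠ j with ht'
  have htrans : Transitive t' := by
    rintro i j k ⟨h1, hne1⟩ ⟨h2, hne2⟩
    refine ⟨trans_of t h1 h2, ?_⟩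
    rintro rfl
    exact hne1 (antisymm_of t h1 h2)
  have hirr' : ∀ i, ¬ t' i i := fun i h => h.2 rfl
  have htot : ∀ i j, i ≠ j → t' i j ∨ t' j i := by
    intro i j hne
    rcases total_of t i j with h | h
    · exact Or.inl ⟨h, hne⟩
    · exact Or.inr ⟨h, hne.symm⟩
  obtain ⟨σ, hσ⟩ := exists_perm_of_strict t' htrans hirr' htot
  refine ⟨σ, fun i j hij => ?_⟩
  have hne : i ≠ j := by
    rintro rfl
    rw [pairProb_self] at hij
    linarith
  exact hσ i j ⟨hts i j (Or.inr (Relation.TransGen.single hij)), hne⟩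

/-- for a (weakly) stochastically transitive `P`, the set of Kemeny
medians is `{σ : (p_{i,j} − 1/2)(σ(j) − σ(i)) > 0 for all i < j with p_{i,j} ≠ 1/2}`
and `V_P = Σ_{i<j} min(p_{i,j}, 1 − p_{i,j})`; if moreover `P` is SST, the Kemeny
median is unique and given by the Copeland ranking
`σ*(i) = 1 + #{j ≠ i : p_{i,j} < 1/2}` (ranks counted starting from 1). -/
theorem kemeny_medians_characterization {n : ℕ} (hn : 1 ≤ n)
    (P : Perm n → ℝ) (hP : IsRankingDist P) (hwst : IsWST P) :
    ({σ : Perm n | IsMedian kendall P σ} =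
      {σ : Perm n | ∀ i j : Fin n, i < j → pairProb P i j ≠ 1 / 2 →
        0 < (pairProb P i j - 1 / 2) * (((σ j).val : ℝ) - ((σ i).val : ℝ))}) ∧
    V kendall P =
      ∑ p ∈ pairsLt n, min (pairProb P p.1 p.2) (1 - pairProb P p.1 p.2) ∧
    (IsSST P → ∀ σ : Perm n, IsMedian kendall P σ ↔
      ∀ i : Fin n, (σ i).val + 1 =
        1 + (Finset.univ.filter fun j : Fin n => j ≠ i ∧ pairProb P i j < 1 / 2).card) := by
  classical
  set Vm : ℝ := ∑ p ∈ pairsLt n, min (pairProb P p.1 p.2) (1 - pairProb P p.1 p.2) with hVmdef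
  have hterm_le : ∀ σ : Perm n, ∀ p ∈ pairsLt n,
      min (pairProb P p.1 p.2) (1 - pairProb P p.1 p.2) ≤
        (if σ p.1 < σ p.2 then 1 - pairProb P p.1 p.2 else pairProb P p.1 p.2) := by
    intro σ p _
    split_ifs
    exacts [min_le_right _ _, min_le_left _ _]
  have hVm_le : ∀ σ, Vm ≤ riskL kendall P σ := fun σ => by
    rw [riskL_eq P hP σ]; exact Finset.sum_le_sum (hterm_le σ)
  -- the pairwise condition
  set M : Perm n → Prop := fun σ => ∀ i j : Fin n, i < j → pairProb P i j ≠ 1 / 2 →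
      0 < (pairProb P i j - 1 / 2) * (((σ j).val : ℝ) - ((σ i).val : ℝ)) with hMdef
  have hMiff : ∀ σ : Perm n, riskL kendall P σ = Vm ↔ M σ := by
    intro σ
    rw [riskL_eq P hP σ, hVmdef, eq_comm, Finset.sum_eq_sum_iff_of_le (hterm_le σ)]
    constructor
    · intro h i j hij hne
      have hm := h (i, j) (by simp [pairsLt, hij])
      simp only at hm
      rcases lt_or_gt_of_ne hne with hq | hq
      · have hmin : min (pairProb P i j) (1 - pairProb P i j) = pairProb P i j :=
          min_eq_left (by linarith)
        have hnlt : ¬ σ i < σ j := by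
          intro hs
          rw [if_pos hs, hmin] at hm
          linarith
        rw [if_neg hnlt, hmin] at hm
        have hji : σ j < σ i := by
          rcases lt_or_gt_of_ne (perm_apply_ne (ne_of_lt hij) : σ i ≠ σ j) with h2 | h2
          · exact absurd h2 hnlt
          · exact h2
        have hval : ((σ j).val : ℝ) < ((σ i).val : ℝ) := by exact_mod_cast hji
        exact mul_pos_of_neg_of_neg (by linarith) (by linarith)
      · have hmin : min (pairProb P i j) (1 - pairProb P i j) = 1 - pairProb P i j :=
          min_eq_right (by linarith)
        have hlt : σ i < σ j := by
          by_contra hs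
          rw [if_neg hs, hmin] at hm
          linarith
        have hval : ((σ i).val : ℝ) < ((σ j).val : ℝ) := by exact_mod_cast hlt
        exact mul_pos (by linarith) (by linarith)
    · intro h p hp
      have hij : p.1 < p.2 := by simpa [pairsLt] using hp
      by_cases hne : pairProb P p.1 p.2 = 1 / 2
      · rw [hne]
        norm_num
      · have hm := h p.1 p.2 hij hne
        rcases lt_or_gt_of_ne hne with hq | hq
        · have hval : ((σ p.2).val : ℝ) < ((σ p.1).val : ℝ) := by nlinarith
          have hji : σ p.2 < σ p.1 := by
            have : (σ p.2).val < (σ p.1).val := by exact_mod_cast hval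
            exact this
          rw [if_neg (not_lt_of_gt hji)]
          exact min_eq_left (by linarith)
        · have hval : ((σ p.1).val : ℝ) < ((σ p.2).val : ℝ) := by nlinarith
          have hlt : σ p.1 < σ p.2 := by
            have : (σ p.1).val < (σ p.2).val := by exact_mod_cast hval
            exact this
          rw [if_pos hlt]
          exact min_eq_right (by linarith)
  obtain ⟨σ₀, hσ₀⟩ := exists_consistent P hwst
  have hM₀ : M σ₀ := by
    intro i j hij hne
    rcases lt_or_gt_of_ne hne with hq | hq
    · have hji : 1 / 2 < pairProb P j i := by
        have := pairProb_add P hP (ne_of_lt hij)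
        linarith
      have := hσ₀ j i hji
      have hval : ((σ₀ j).val : ℝ) < ((σ₀ i).val : ℝ) := by exact_mod_cast this
      exact mul_pos_of_neg_of_neg (by linarith) (by linarith)
    · have := hσ₀ i j hq
      have hval : ((σ₀ i).val : ℝ) < ((σ₀ j).val : ℝ) := by exact_mod_cast this
      exact mul_pos (by linarith) (by linarith)
  have hL₀ : riskL kendall P σ₀ = Vm := (hMiff σ₀).mpr hM₀
  have hmed_iff : ∀ σ : Perm n, IsMedian kendall P σ ↔ riskL kendall P σ = Vm := by
    intro σ
    constructor
    · intro hmed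
      exact le_antisymm (hL₀ ▸ hmed σ₀) (hVm_le σ)
    · intro h τ
      rw [h]; exact hVm_le τ
  refine ⟨?_, ?_, ?_⟩
  · ext σ
    simp only [Set.mem_setOf_eq]
    rw [hmed_iff σ, hMiff σ]
  · -- V = Vm
    apply le_antisymm
    · have hbdd : BddBelow (Set.range (riskL kendall P)) := by
        refine ⟨Vm, ?_⟩
        rintro x ⟨σ, rfl⟩
        exact hVm_le σ
      calc V kendall P ≤ riskL kendall P σ₀ := ciInf_le hbdd σ₀
        _ = Vm := hL₀
    · exact le_ciInf hVm_le
  · intro hsst σ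
    obtain ⟨_, hneLT⟩ := hsst
    have hne_all : ∀ i j : Fin n, i ≠ j → pairProb P i j ≠ 1 / 2 := by
      intro i j hne
      rcases lt_or_gt_of_ne hne with h | h
      · exact hneLT i j h
      · have := hneLT j i h
        have hadd := pairProb_add P hP hne
        intro hc
        apply this
        linarith
    set b : Fin n → Fin n → Prop := fun i j => 1 / 2 < pairProb P i j with hbdef
    have bne : ∀ i j, b i j → i ≠ j := by
      rintro i i h rfl
      have h' : 1 / 2 < pairProb P i i := h
      rw [pairProb_self] at h'
      linarith
    have btot : ∀ i j, i ≠ j → b i j ∨ b j i := by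
      intro i j hne
      have hadd := pairProb_add P hP hne
      rcases lt_or_gt_of_ne (hne_all i j hne) with h | h
      · right; show 1 / 2 < pairProb P j i; linarith
      · left; exact h
    have btrans : ∀ i j k, b i j → b j k → b i k := by
      intro i j k h1 h2
      have hij := bne _ _ h1
      have hjk := bne _ _ h2
      have hik : i ≠ k := by
        rintro rfl
        have hadd := pairProb_add P hP hij
        change 1 / 2 < pairProb P i j at h1
        change 1 / 2 < pairProb P j i at h2
        linarith
      rcases lt_or_gt_of_ne (hne_all i k hik) with h | h
      · exact absurd (hwst i j k (le_of_lt h1) (le_of_lt h2)) (not_le_of_gt h)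
      · exact h
    -- E: full pairwise agreement
    have hEiff : M σ ↔ ∀ i j, b i j → σ i < σ j := by
      constructor
      · intro hM i j hb
        have hne := bne _ _ hb
        rcases lt_or_gt_of_ne hne with hij | hij
        · have hm := hM i j hij (hne_all i j hne)
          have hfac : 0 < pairProb P i j - 1 / 2 := by
            change 1 / 2 < pairProb P i j at hb; linarith
          have hval : ((σ i).val : ℝ) < ((σ j).val : ℝ) := by nlinarith
          exact_mod_cast hval
        · have hm := hM j i hij (hne_all j i hne.symm)
          have hadd := pairProb_add P hP hne
          have hfac : pairProb P j i - 1 / 2 < 0 := by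
            change 1 / 2 < pairProb P i j at hb; linarith
          have hval : ((σ i).val : ℝ) < ((σ j).val : ℝ) := by nlinarith
          exact_mod_cast hval
      · intro hE i j hij hne
        rcases lt_or_gt_of_ne hne with hq | hq
        · have hb : b j i := by
            show 1 / 2 < pairProb P j i
            have := pairProb_add P hP (ne_of_lt hij)
            linarith
          have := hE j i hb
          have hval : ((σ j).val : ℝ) < ((σ i).val : ℝ) := by exact_mod_cast this
          exact mul_pos_of_neg_of_neg (by linarith) (by linarith)
        · have := hE i j hq
          have hval : ((σ i).val : ℝ) < ((σ j).val : ℝ) := by exact_mod_cast this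
          exact mul_pos (by linarith) (by linarith)
    -- the Copeland score
    set s : Fin n → ℕ := fun i => (Finset.univ.filter fun j : Fin n =>
        j ≠ i ∧ pairProb P i j < 1 / 2).card with hsdef
    have hsetEq : ∀ i, (Finset.univ.filter fun j : Fin n => j ≠ i ∧ pairProb P i j < 1 / 2)
        = Finset.univ.filter fun j => b j i := by
      intro i
      ext j
      simp only [Finset.mem_filter, Finset.mem_univ, true_and]
      constructor
      · rintro ⟨hne, hlt⟩
        show 1 / 2 < pairProb P j i
        have := pairProb_add P hP (Ne.symm hne)
        linarith
      · intro hb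
        have hne := bne _ _ hb
        have := pairProb_add P hP (Ne.symm hne)
        change 1 / 2 < pairProb P j i at hb
        exact ⟨hne, by linarith⟩
    have hcardlt : ∀ a : Fin n, (Finset.univ.filter fun m : Fin n => m < a).card = a.val := by
      intro a
      have : (Finset.univ.filter fun m : Fin n => m < a) = Finset.Iio a := by
        ext m; simp [Finset.mem_Iio]
      rw [this, Fin.card_Iio]
    have hval_eq : (∀ i j, b i j → σ i < σ j) ↔ ∀ i : Fin n, (σ i).val = s i := by
      constructor
      · intro hE i
        have hfe : (Finset.univ.filter fun k : Fin n => σ k < σ i)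
            = Finset.univ.filter fun k => b k i := by
          ext k
          simp only [Finset.mem_filter, Finset.mem_univ, true_and]
          constructor
          · intro hk
            have hne : k ≠ i := fun hc => absurd (hc ▸ hk) (lt_irrefl _)
            rcases btot k i hne with h | h
            · exact h
            · exact absurd (hE i k h) (not_lt_of_gt hk)
          · exact fun h => hE k i h
        have hcard : (Finset.univ.filter fun k : Fin n => σ k < σ i).card = (σ i).val := by
          rw [← hcardlt (σ i)]
          apply Finset.card_bij (fun k _ => σ k)
          · intro k hk
            simp only [Finset.mem_filter, Finset.mem_univ, true_and] at hk ⊢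
            exact hk
          · intro k₁ h₁ k₂ h₂ h
            exact σ.injective h
          · intro m hm
            simp only [Finset.mem_filter, Finset.mem_univ, true_and] at hm
            exact ⟨σ.symm m, by simp [hm], by simp⟩
        show (σ i).val =
          (Finset.univ.filter fun j : Fin n => j ≠ i ∧ pairProb P i j < 1 / 2).card
        rw [hsetEq i, ← hfe, hcard]
      · intro hv i j hb
        have hlt : s i < s j := by
          rw [hsdef]
          simp only
          rw [hsetEq i, hsetEq j]
          apply Finset.card_lt_card
          constructor
          · intro k hk
            simp only [Finset.mem_filter, Finset.mem_univ, true_and] at hk ⊢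
            exact btrans k i j hk hb
          · intro hsub
            have hi : i ∈ Finset.univ.filter fun k => b k j := by simp [hb]
            have h2 := hsub hi
            simp only [Finset.mem_filter, Finset.mem_univ, true_and] at h2
            exact absurd rfl (bne i i h2)
        show σ i < σ j
        have : (σ i).val < (σ j).val := by rw [hv i, hv j]; exact hlt
        exact this
    rw [hmed_iff σ, hMiff σ, hEiff, hval_eq]
    constructor
    · intro h i
      have h2 : (σ i).val =
          (Finset.univ.filter fun j : Fin n => j ≠ i ∧ pairProb P i j < 1 / 2).card := h i
      omega
    · intro h i
      have h2 : (σ i).val + 1 =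
          1 + (Finset.univ.filter fun j : Fin n => j ≠ i ∧ pairProb P i j < 1 / 2).card := h i
      show (σ i).val =
        (Finset.univ.filter fun j : Fin n => j ≠ i ∧ pairProb P i j < 1 / 2).card
      omega

end CRD
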